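/- Let n ≥ 1, p ∈ ℂⁿ, and t, ρ > 0, and let V, W be holomorphic vector fields on an open neighborhood of the closed polydisc B_{t+ρ}(p) ⊆ ℂⁿ. Then ‖[V,W]‖_{B_t(p)} ≤ (2n/ρ) · ‖V‖_{B_{t+ρ}(p)} · ‖W‖_{B_{t+ρ}(p)}. -/

import Mathlib

/-- The Lie bracket of holomorphic vector fields `V, W : Ω → ℂⁿ`,
`[V,W](z) = DW(z)(V(z)) − DV(z)(W(z))`. -/
noncomputable def lieB {n : ℕ} (V W : (Fin n → ℂ) → (Fin n → ℂ)) :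
    (Fin n → ℂ) → (Fin n → ℂ) :=
  fun z => fderiv ℂ W z (V z) - fderiv ℂ V z (W z)

/-- The closed polydisc of polyradius `r` centered at `p`. -/
def polyDisc {n : ℕ} (p : Fin n → ℂ) (r : ℝ) : Set (Fin n → ℂ) :=
  {z | ∀ j, ‖z j - p j‖ ≤ r}

/-- `‖V‖_K = max_j sup_{z ∈ K} |V^j(z)|` (the sup over `K` of the sup-norm of `V`). -/
noncomputable def vfNorm {n : ℕ} (V : (Fin n → ℂ) → (Fin n → ℂ))
    (K : Set (Fin n → ℂ)) : ℝ :=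
  ⨆ z ∈ K, ‖V z‖

/-!
The sup norm on `ℂⁿ` makes the polydisc `B_{t+ρ}(p)` contain the ball of radius `ρ` about every
point `z` of `B_t(p)`. Restricting a field `F` to the complex line `w ↦ z + w • v` and applying
the one-variable Cauchy estimate on that ball gives `‖DF(z)‖ ≤ ‖F‖_{B_{t+ρ}} / ρ`, so each of the
two terms of `[V,W](z)` is at most `‖V‖_{B_{t+ρ}} ‖W‖_{B_{t+ρ}} / ρ`.
-/

open Metric Set

section CauchyEstimate

variable {E F : Type*} [NormedAddCommGroup E] [NormedSpace ℂ E]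
  [NormedAddCommGroup F] [NormedSpace ℂ F]

theorem norm_fderiv_le_of_forall_mem_closedBall_norm_le {f : E → F} {z : E} {R C : ℝ}
    (hR : 0 < R) (hf : DifferentiableOn ℂ f (closedBall z R))
    (hC : ∀ y ∈ closedBall z R, ‖f y‖ ≤ C) :
    ‖fderiv ℂ f z‖ ≤ C / R := by
  have hC₀ : 0 ≤ C := (norm_nonneg _).trans (hC z (mem_closedBall_self hR.le))
  refine ContinuousLinearMap.opNorm_le_bound _ (by positivity) fun v => ?_
  rcases eq_or_ne v 0 with rfl | hv
  · simp
  have hv₀ : 0 < ‖v‖ := norm_pos_iff.mpr hv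
  set g : ℂ → F := fun w => f (z + w • v)
  have hline : ∀ w ∈ closedBall (0 : ℂ) (R / ‖v‖), z + w • v ∈ closedBall z R := by
    intro w hw
    rw [mem_closedBall_zero_iff, le_div_iff₀ hv₀] at hw
    rwa [mem_closedBall_iff_norm, add_sub_cancel_left, norm_smul]
  have hg : HasDerivAt g (fderiv ℂ f z v) 0 := by
    have hf' : HasFDerivAt f (fderiv ℂ f z) (z + (0 : ℂ) • v) := by
      simpa using (hf.differentiableAt (closedBall_mem_nhds z hR)).hasFDerivAt
    simpa [Function.comp_def] using
      hf'.comp_hasDerivAt (0 : ℂ) (((hasDerivAt_id _).smul_const v).const_add z)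
  have hgd : DiffContOnCl ℂ g (ball 0 (R / ‖v‖)) := by
    refine DifferentiableOn.diffContOnCl ?_
    rw [closure_ball _ (div_pos hR hv₀).ne']
    exact hf.comp (by fun_prop) hline
  calc ‖fderiv ℂ f z v‖ = ‖deriv g 0‖ := by rw [hg.deriv]
    _ ≤ C / (R / ‖v‖) := Complex.norm_deriv_le_of_forall_mem_sphere_norm_le (by positivity) hgd
        fun w hw => hC _ (hline w (sphere_subset_closedBall hw))
    _ = C / R * ‖v‖ := by field_simp

end CauchyEstimate

section PolyDisc

variable {n : ℕ}

theorem isCompact_polyDisc (p : Fin n → ℂ) (r : ℝ) : IsCompact (polyDisc p r) := by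
  have : polyDisc p r = univ.pi fun j => closedBall (p j) r := by
    ext z
    simp [polyDisc, dist_eq_norm]
  rw [this]
  exact isCompact_univ_pi fun j => isCompact_closedBall _ _

theorem closedBall_subset_polyDisc {p z : Fin n → ℂ} {t ρ : ℝ} (hz : z ∈ polyDisc p t) :
    closedBall z ρ ⊆ polyDisc p (t + ρ) := by
  intro y hy j
  have hyj : ‖y j - z j‖ ≤ ρ := by
    rw [← dist_eq_norm]
    exact (dist_le_pi_dist y z j).trans hy
  calc ‖y j - p j‖ = ‖(y j - z j) + (z j - p j)‖ := by rw [sub_add_sub_cancel]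
    _ ≤ ‖y j - z j‖ + ‖z j - p j‖ := norm_add_le _ _
    _ ≤ t + ρ := by linarith [hz j]

theorem vfNorm_nonneg (V : (Fin n → ℂ) → Fin n → ℂ) (K : Set (Fin n → ℂ)) :
    0 ≤ vfNorm V K :=
  Real.iSup_nonneg fun _ => Real.iSup_nonneg fun _ => norm_nonneg _

theorem norm_le_vfNorm {V : (Fin n → ℂ) → Fin n → ℂ} {K : Set (Fin n → ℂ)}
    (hK : IsCompact K) (hV : ContinuousOn V K) {z : Fin n → ℂ} (hz : z ∈ K) :
    ‖V z‖ ≤ vfNorm V K := by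
  obtain ⟨C, hC⟩ := (hK.image_of_continuousOn hV.norm).bddAbove
  refine le_ciSup₂ (f := fun y (_ : y ∈ K) => ‖V y‖) ⟨C, ?_⟩ z hz
  rintro _ ⟨_, ⟨y, rfl⟩, ⟨hy, rfl⟩⟩
  exact hC (mem_image_of_mem _ hy)

theorem vfNorm_le {V : (Fin n → ℂ) → Fin n → ℂ} {K : Set (Fin n → ℂ)} {C : ℝ}
    (hC₀ : 0 ≤ C) (hC : ∀ z ∈ K, ‖V z‖ ≤ C) : vfNorm V K ≤ C :=
  Real.iSup_le (fun z => Real.iSup_le (hC z) hC₀) hC₀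

end PolyDisc

theorem stmt_3_general (n : ℕ) (hn : 1 ≤ n) (p : Fin n → ℂ) (t ρ : ℝ) (hρ : 0 < ρ)
    (Ω : Set (Fin n → ℂ)) (hsub : polyDisc p (t + ρ) ⊆ Ω)
    (V W : (Fin n → ℂ) → (Fin n → ℂ))
    (hV : DifferentiableOn ℂ V Ω) (hW : DifferentiableOn ℂ W Ω) :
    vfNorm (lieB V W) (polyDisc p t)
      ≤ (2 * n / ρ) * vfNorm V (polyDisc p (t + ρ)) * vfNorm W (polyDisc p (t + ρ)) := by
  set K := polyDisc p (t + ρ)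
  have hVK : ∀ y ∈ K, ‖V y‖ ≤ vfNorm V K := fun y =>
    norm_le_vfNorm (isCompact_polyDisc p _) (hV.mono hsub).continuousOn
  have hWK : ∀ y ∈ K, ‖W y‖ ≤ vfNorm W K := fun y =>
    norm_le_vfNorm (isCompact_polyDisc p _) (hW.mono hsub).continuousOn
  have hn' : (1 : ℝ) ≤ n := by exact_mod_cast hn
  have hV₀ := vfNorm_nonneg V K
  have hW₀ := vfNorm_nonneg W K
  refine vfNorm_le (by positivity) fun z hz => ?_
  have hzK : closedBall z ρ ⊆ K := closedBall_subset_polyDisc hz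
  have hDV := norm_fderiv_le_of_forall_mem_closedBall_norm_le hρ
    ((hV.mono hsub).mono hzK) fun y hy => hVK y (hzK hy)
  have hDW := norm_fderiv_le_of_forall_mem_closedBall_norm_le hρ
    ((hW.mono hsub).mono hzK) fun y hy => hWK y (hzK hy)
  have hzK' : z ∈ K := hzK (mem_closedBall_self hρ.le)
  calc ‖lieB V W z‖ ≤ ‖fderiv ℂ W z‖ * ‖V z‖ + ‖fderiv ℂ V z‖ * ‖W z‖ :=
        (norm_sub_le _ _).trans
          (add_le_add (ContinuousLinearMap.le_opNorm _ _) (ContinuousLinearMap.le_opNorm _ _))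
    _ ≤ vfNorm W K / ρ * vfNorm V K + vfNorm V K / ρ * vfNorm W K := by
        gcongr
        exacts [hVK z hzK', hWK z hzK']
    _ = (2 / ρ) * vfNorm V K * vfNorm W K := by ring
    _ ≤ (2 * n / ρ) * vfNorm V K * vfNorm W K := by gcongr; linarith

/-- Base case of the nested commutator estimate: for holomorphic vector fields `V, W`
on a neighborhood of `B_{t+ρ}(p)`, `‖[V,W]‖_{B_t} ≤ (2n/ρ)‖V‖_{B_{t+ρ}}‖W‖_{B_{t+ρ}}`. -/
theorem stmt_3 (n : ℕ) (hn : 1 ≤ n) (p : Fin n → ℂ) (t ρ : ℝ) (ht : 0 < t) (hρ : 0 < ρ)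
    (Ω : Set (Fin n → ℂ)) (hΩ : IsOpen Ω) (hsub : polyDisc p (t + ρ) ⊆ Ω)
    (V W : (Fin n → ℂ) → (Fin n → ℂ))
    (hV : DifferentiableOn ℂ V Ω) (hW : DifferentiableOn ℂ W Ω) :
    vfNorm (lieB V W) (polyDisc p t)
      ≤ (2 * n / ρ) * vfNorm V (polyDisc p (t + ρ)) * vfNorm W (polyDisc p (t + ρ)) :=
  stmt_3_general n hn p t ρ hρ Ω hsub V W hV hW
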